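/- arXiv:1911.03544 — 4 statements merged into one kernel-verified Lean document; each statement's English description precedes it below -/
import Mathlib

section
/- Let d ≥ 2 be an integer and c > 0. Then for all r > 0, r^{1−d} ∫₀^r s^{d−1} e^{−c(r²−s²)} ds ≤ C r/(1 + √c·r)², where C depends only on d. -/
open MeasureTheory Real

/- Bounding `s^{d-1} ≤ r^{d-2} s` on `[0, r]` reduces the integral to the explicitly computable
`∫₀^r s e^{-c(r²-s²)} ds = (1 - e^{-cr²}) / (2c)`, so the left side is at most
`(1 - e^{-x²}) / (2cr)` with `x = √c r`. This is `≤ 2r/(1 + x)²`: for `x ≤ 1` use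
`1 - e^{-x²} ≤ x²`, for `x ≥ 1` use `1 - e^{-x²} ≤ 1`. -/

theorem integral_mul_exp_neg_mul_sq_sub_sq {c : ℝ} (hc : c ≠ 0) (r : ℝ) :
    ∫ s in (0 : ℝ)..r, s * exp (-c * (r ^ 2 - s ^ 2)) = (1 - exp (-(c * r ^ 2))) / (2 * c) := by
  have hderiv : ∀ s ∈ Set.uIcc (0 : ℝ) r,
      HasDerivAt (fun s => exp (-c * (r ^ 2 - s ^ 2)) / (2 * c))
        (s * exp (-c * (r ^ 2 - s ^ 2))) s := by
    intro s _
    have hinner : HasDerivAt (fun s : ℝ => -c * (r ^ 2 - s ^ 2)) (2 * c * s) s := by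
      refine (((hasDerivAt_pow 2 s).const_sub (r ^ 2)).const_mul (-c)).congr_deriv ?_
      ring
    refine (hinner.exp.div_const (2 * c)).congr_deriv ?_
    field_simp
  rw [intervalIntegral.integral_eq_sub_of_hasDerivAt hderiv
    (Continuous.intervalIntegrable (by fun_prop) _ _)]
  simp only [sub_self, mul_zero, exp_zero]
  ring_nf

theorem integral_pow_succ_mul_le_pow_mul_integral {f : ℝ → ℝ} {r : ℝ} (hr : 0 ≤ r)
    (hf : IntervalIntegrable f volume 0 r) (hf_nonneg : ∀ s ∈ Set.Icc 0 r, 0 ≤ f s) (k : ℕ) :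
    ∫ s in (0 : ℝ)..r, s ^ (k + 1) * f s ≤ r ^ k * ∫ s in (0 : ℝ)..r, s * f s := by
  rw [← intervalIntegral.integral_const_mul]
  refine intervalIntegral.integral_mono_on hr
    (hf.continuousOn_mul (continuous_pow (k + 1)).continuousOn)
    ((hf.continuousOn_mul continuous_id.continuousOn).const_mul _) fun s hs => ?_
  rw [pow_succ, mul_assoc]
  exact mul_le_mul_of_nonneg_right (pow_le_pow_left₀ hs.1 hs.2 k)
    (mul_nonneg hs.1 (hf_nonneg s hs))

theorem one_sub_exp_neg_sq_mul_one_add_sq_le {x : ℝ} (hx : 0 ≤ x) :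
    (1 - exp (-x ^ 2)) * (1 + x) ^ 2 ≤ 4 * x ^ 2 := by
  have hE_le_one : exp (-x ^ 2) ≤ 1 := exp_le_one_iff.mpr (by nlinarith)
  have hE_ge : 1 - x ^ 2 ≤ exp (-x ^ 2) := by linarith [add_one_le_exp (-x ^ 2)]
  rcases le_total x 1 with hx1 | hx1
  · nlinarith [mul_le_mul (by linarith : 1 - exp (-x ^ 2) ≤ x ^ 2)
      (by nlinarith : (1 + x) ^ 2 ≤ 4) (by positivity) (by positivity)]
  · nlinarith [exp_pos (-x ^ 2)]

/-- Weighted exponential integral bound: for `d ≥ 2` there is `C > 0` (depending only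
on `d`) such that for all `c > 0` and `r > 0`,
`r^{1-d} ∫₀^r s^{d-1} e^{-c(r²-s²)} ds ≤ C r/(1 + √c r)²`. -/
theorem stmt8 (d : ℕ) (hd : 2 ≤ d) :
    ∃ C > 0, ∀ c : ℝ, 0 < c → ∀ r : ℝ, 0 < r →
      r ^ (1 - (d : ℤ)) * (∫ s in (0:ℝ)..r, s ^ (d - 1) * Real.exp (-c * (r ^ 2 - s ^ 2)))
        ≤ C * r / (1 + Real.sqrt c * r) ^ 2 := by
  obtain ⟨k, rfl⟩ : ∃ k, d = k + 2 := ⟨d - 2, by omega⟩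
  refine ⟨2, two_pos, fun c hc r hr => ?_⟩
  set x := √c * r
  have hx_sq : x ^ 2 = c * r ^ 2 := by rw [mul_pow, sq_sqrt hc.le]
  have hpow : r ^ (1 - ((k + 2 : ℕ) : ℤ)) = (r ^ (k + 1))⁻¹ := by
    rw [← zpow_natCast, ← zpow_neg]
    congr 1
  calc r ^ (1 - ((k + 2 : ℕ) : ℤ)) *
        ∫ s in (0 : ℝ)..r, s ^ (k + 2 - 1) * exp (-c * (r ^ 2 - s ^ 2))
      ≤ (r ^ (k + 1))⁻¹ * (r ^ k * ((1 - exp (-(c * r ^ 2))) / (2 * c))) := by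
        rw [hpow, ← integral_mul_exp_neg_mul_sq_sub_sq hc.ne']
        gcongr
        exact integral_pow_succ_mul_le_pow_mul_integral hr.le
          (Continuous.intervalIntegrable (by fun_prop) _ _)
          (fun s _ => (exp_pos _).le) k
    _ = (1 - exp (-x ^ 2)) / (2 * c * r) := by
        rw [hx_sq]
        field_simp
        ring
    _ ≤ 2 * r / (1 + x) ^ 2 := by
        rw [div_le_div_iff₀ (by positivity) (by positivity)]
        nlinarith [one_sub_exp_neg_sq_mul_one_add_sq_le (by positivity : 0 ≤ x), mul_pos hc hr]
end

section
/- Let d ≥ 3 be an integer and c > 0. Then for all r ≥ 1/√c, r^{1−d} ∫₀^r s^{d−3} e^{−c(r²−s²)} ds ≤ C/(c r³), where C depends only on d. -/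
open MeasureTheory

/-- Weighted exponential integral bound: for `d ≥ 3` there is `C > 0` (depending only
on `d`) such that for all `c > 0` and `r ≥ 1/√c`,
`r^{1-d} ∫₀^r s^{d-3} e^{-c(r²-s²)} ds ≤ C/(c r³)`. -/
theorem stmt9 (d : ℕ) (hd : 3 ≤ d) :
    ∃ C > 0, ∀ c : ℝ, 0 < c → ∀ r : ℝ, 1 / Real.sqrt c ≤ r →
      r ^ (1 - (d : ℤ)) * (∫ s in (0:ℝ)..r, s ^ (d - 3) * Real.exp (-c * (r ^ 2 - s ^ 2)))
        ≤ C / (c * r ^ 3) := by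
  refine ⟨1, one_pos, ?_⟩
  intro c hc r hr
  have hr0 : 0 < r := lt_of_lt_of_le (by positivity) hr
  set k := c * r with hk
  have hk0 : 0 < k := by positivity
  have hmono : (∫ s in (0:ℝ)..r, s ^ (d - 3) * Real.exp (-c * (r ^ 2 - s ^ 2)))
      ≤ ∫ s in (0:ℝ)..r, r ^ (d - 3) * Real.exp (k * s - k * r) := by
    apply intervalIntegral.integral_mono_on hr0.le
    · apply ContinuousOn.intervalIntegrable; fun_prop
    · apply ContinuousOn.intervalIntegrable; fun_prop
    · intro s hs
      rcases hs with ⟨hs0, hsr⟩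
      have h1 : s ^ (d - 3) ≤ r ^ (d - 3) := pow_le_pow_left₀ hs0 hsr _
      have h2 : Real.exp (-c * (r ^ 2 - s ^ 2)) ≤ Real.exp (k * s - k * r) := by
        apply Real.exp_le_exp.mpr
        have : r * (r - s) ≤ (r + s) * (r - s) := by nlinarith
        nlinarith
      exact mul_le_mul h1 h2 (Real.exp_pos _).le (by positivity)
  have hcalc : (∫ s in (0:ℝ)..r, r ^ (d - 3) * Real.exp (k * s - k * r))
      = r ^ (d - 3) * (Real.exp (-(k*r)) * ((Real.exp (k*r) - 1) / k)) := by
    have h0 : (∫ s in (0:ℝ)..r, Real.exp (k * s - k * r))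
        = Real.exp (-(k*r)) * ∫ s in (0:ℝ)..r, Real.exp (k * s) := by
      rw [← intervalIntegral.integral_const_mul]
      congr 1; ext s
      rw [← Real.exp_add]; ring_nf
    rw [intervalIntegral.integral_const_mul, h0,
      intervalIntegral.integral_comp_mul_left (fun x => Real.exp x) hk0.ne']
    rw [mul_zero, integral_exp]
    simp [smul_eq_mul, div_eq_inv_mul, mul_comm]
  have hbound : (∫ s in (0:ℝ)..r, s ^ (d - 3) * Real.exp (-c * (r ^ 2 - s ^ 2)))
      ≤ r ^ (d - 3) / k := by
    refine hmono.trans ?_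
    rw [hcalc]
    have hnum : Real.exp (-(k*r)) * (Real.exp (k*r) - 1) ≤ 1 := by
      rw [mul_sub, ← Real.exp_add]
      have := Real.exp_pos (-(k*r))
      simp only [neg_add_cancel, Real.exp_zero]
      linarith
    have h1 : Real.exp (-(k*r)) * ((Real.exp (k*r) - 1) / k) ≤ 1 / k := by
      rw [mul_div_assoc']
      exact (div_le_div_iff_of_pos_right hk0).mpr hnum
    calc r ^ (d - 3) * (Real.exp (-(k*r)) * ((Real.exp (k*r) - 1) / k))
        ≤ r ^ (d - 3) * (1 / k) := by
          exact mul_le_mul_of_nonneg_left h1 (by positivity)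
      _ = r ^ (d - 3) / k := by ring
  calc r ^ (1 - (d : ℤ)) * (∫ s in (0:ℝ)..r, s ^ (d - 3) * Real.exp (-c * (r ^ 2 - s ^ 2)))
      ≤ r ^ (1 - (d : ℤ)) * (r ^ (d - 3) / k) :=
        mul_le_mul_of_nonneg_left hbound (by positivity)
    _ = 1 / (c * r ^ 3) := by
        rw [hk, ← zpow_natCast r (d - 3), mul_div_assoc', ← zpow_add₀ hr0.ne']
        have he : 1 - (d : ℤ) + ((d - 3 : ℕ) : ℤ) = -2 := by omega
        rw [he, zpow_neg, show ((2:ℤ) = ((2:ℕ):ℤ)) from rfl, zpow_natCast]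
        field_simp
end

section
/- Let d ≥ 3 be an integer and c > 0. Then for all r > 0, r^{2−d} ∫₀^r s^{d−3} e^{−c(r²−s²)} ds ≤ C/(1 + √c·r)², with C depending only on d. -/
open MeasureTheory


lemma my_integral_exp_mul (k a b : ℝ) (hk : k ≠ 0) :
    ∫ s in a..b, Real.exp (k * s) = (Real.exp (k * b) - Real.exp (k * a)) / k := by
  have h : ∀ s : ℝ, HasDerivAt (fun x => Real.exp (k * x) / k) (Real.exp (k * s)) s := by
    intro s
    have h1 : HasDerivAt (fun x : ℝ => k * x) k s := by
      simpa using (hasDerivAt_id s).const_mul k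
    have h2 := (Real.hasDerivAt_exp (k * s)).comp s h1
    have h3 := h2.div_const k
    simpa [mul_div_assoc, mul_div_cancel_right₀ _ hk] using h3
  rw [intervalIntegral.integral_eq_sub_of_hasDerivAt (fun s _ => h s)
    ((Real.continuous_exp.comp (continuous_const.mul continuous_id)).intervalIntegrable a b)]
  ring

/-- Weighted exponential integral bound: for `d ≥ 3` there is `C > 0` (depending only
on `d`) such that for all `c > 0` and `r > 0`,
`r^{2-d} ∫₀^r s^{d-3} e^{-c(r²-s²)} ds ≤ C/(1 + √c r)²`. -/
theorem stmt10 (d : ℕ) (hd : 3 ≤ d) :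
    ∃ C > 0, ∀ c : ℝ, 0 < c → ∀ r : ℝ, 0 < r →
      r ^ (2 - (d : ℤ)) * (∫ s in (0:ℝ)..r, s ^ (d - 3) * Real.exp (-c * (r ^ 2 - s ^ 2)))
        ≤ C / (1 + Real.sqrt c * r) ^ 2 := by
  refine ⟨4, by norm_num, fun c hc r hr => ?_⟩
  set y := Real.sqrt c * r with hy
  have hy0 : 0 < y := mul_pos (Real.sqrt_pos.2 hc) hr
  have hyy : y ^ 2 = c * r ^ 2 := by
    rw [hy, mul_pow, Real.sq_sqrt hc.le]
  have hr0 : r ≠ 0 := hr.ne'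
  -- continuity/integrability of the integrand
  have hf : ∀ (u : ℝ), IntervalIntegrable
      (fun s => s ^ (d - 3) * Real.exp (-c * (r ^ 2 - s ^ 2))) volume 0 u := by
    intro u
    exact (Continuous.intervalIntegrable (by continuity)) 0 u
  -- the zpow arithmetic: r^(2-d) * r^(d-3) = r⁻¹
  have hzp : r ^ (2 - (d : ℤ)) * r ^ (d - 3 : ℕ) = r⁻¹ := by
    have : ((d - 3 : ℕ) : ℤ) = (d : ℤ) - 3 := by
      omega
    rw [← zpow_natCast r (d - 3), this, ← zpow_add₀ hr0]
    norm_num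
  rcases le_or_gt (c * r ^ 2) 1 with hx | hx
  · -- small case: bound integrand by r^(d-3)
    have hI : (∫ s in (0:ℝ)..r, s ^ (d - 3) * Real.exp (-c * (r ^ 2 - s ^ 2)))
        ≤ r ^ (d - 3) * r := by
      have := intervalIntegral.integral_mono_on hr.le (hf r)
        (intervalIntegrable_const (c := r ^ (d - 3)))
        (fun s hs => by
          have hs0 : 0 ≤ s := hs.1
          have hsr : s ≤ r := hs.2
          have h1 : s ^ (d - 3) ≤ r ^ (d - 3) := pow_le_pow_left₀ hs0 hsr _
          have h2 : Real.exp (-c * (r ^ 2 - s ^ 2)) ≤ 1 := by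
            apply Real.exp_le_one_iff.2
            nlinarith [mul_nonneg hc.le (mul_nonneg (sub_nonneg.2 hsr) (by linarith : (0:ℝ) ≤ r + s))]
          calc s ^ (d - 3) * Real.exp (-c * (r ^ 2 - s ^ 2))
              ≤ r ^ (d - 3) * 1 := by
                apply mul_le_mul h1 h2 (Real.exp_pos _).le (pow_nonneg hr.le _)
            _ = r ^ (d - 3) := mul_one _)
      simpa [mul_comm] using this
    have h1 : r ^ (2 - (d : ℤ)) *
        (∫ s in (0:ℝ)..r, s ^ (d - 3) * Real.exp (-c * (r ^ 2 - s ^ 2))) ≤ 1 := by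
      have hz : 0 < r ^ (2 - (d : ℤ)) := zpow_pos hr _
      calc r ^ (2 - (d : ℤ)) * _ ≤ r ^ (2 - (d : ℤ)) * (r ^ (d - 3) * r) := by
            exact mul_le_mul_of_nonneg_left hI hz.le
        _ = 1 := by rw [← mul_assoc, hzp]; field_simp
    have hyle : y ≤ 1 := by nlinarith [hyy]
    have : (1 + y) ^ 2 ≤ 4 := by nlinarith
    calc r ^ (2 - (d : ℤ)) * _ ≤ 1 := h1
      _ ≤ 4 / (1 + y) ^ 2 := by
          rw [le_div_iff₀ (by positivity)]; linarith
  · -- large case: bound by exponential comparison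
    have hcr : c * r ≠ 0 := by positivity
    have hI : (∫ s in (0:ℝ)..r, s ^ (d - 3) * Real.exp (-c * (r ^ 2 - s ^ 2)))
        ≤ r ^ (d - 3) / (c * r) := by
      have hg : IntervalIntegrable
          (fun s => r ^ (d - 3) * (Real.exp (-(c * r ^ 2)) * Real.exp (c * r * s)))
          volume 0 r := (Continuous.intervalIntegrable (by continuity)) 0 r
      have hmono := intervalIntegral.integral_mono_on hr.le (hf r) hg
        (fun s hs => by
          have hs0 : 0 ≤ s := hs.1
          have hsr : s ≤ r := hs.2
          have h1 : s ^ (d - 3) ≤ r ^ (d - 3) := pow_le_pow_left₀ hs0 hsr _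
          have h2 : Real.exp (-c * (r ^ 2 - s ^ 2))
              ≤ Real.exp (-(c * r ^ 2)) * Real.exp (c * r * s) := by
            rw [← Real.exp_add]
            apply Real.exp_le_exp.2
            nlinarith [mul_nonneg (mul_nonneg hc.le hs0) (sub_nonneg.2 hsr)]
          exact mul_le_mul h1 h2 (Real.exp_pos _).le (pow_nonneg hr.le _))
      have hcomp : (∫ s in (0:ℝ)..r,
          r ^ (d - 3) * (Real.exp (-(c * r ^ 2)) * Real.exp (c * r * s)))
          = r ^ (d - 3) * (Real.exp (-(c * r ^ 2)) *
            ((Real.exp (c * r * r) - Real.exp (c * r * 0)) / (c * r))) := by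
        rw [intervalIntegral.integral_const_mul, intervalIntegral.integral_const_mul,
          my_integral_exp_mul _ _ _ hcr]
      have hle : Real.exp (-(c * r ^ 2)) *
            ((Real.exp (c * r * r) - Real.exp (c * r * 0)) / (c * r)) ≤ 1 / (c * r) := by
        have hrr : c * r * r = c * r ^ 2 := by ring
        have hE : (0:ℝ) < Real.exp (c * r ^ 2) := Real.exp_pos _
        rw [hrr, mul_zero, Real.exp_zero, Real.exp_neg,
          show (Real.exp (c * r ^ 2))⁻¹ * ((Real.exp (c * r ^ 2) - 1) / (c * r))
            = (1 - (Real.exp (c * r ^ 2))⁻¹) / (c * r) from by field_simp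
        ]
        have h2 : (0:ℝ) ≤ (Real.exp (c * r ^ 2))⁻¹ := by positivity
        gcongr
        linarith
      calc (∫ s in (0:ℝ)..r, s ^ (d - 3) * Real.exp (-c * (r ^ 2 - s ^ 2)))
          ≤ _ := hmono
        _ = r ^ (d - 3) * (Real.exp (-(c * r ^ 2)) *
            ((Real.exp (c * r * r) - Real.exp (c * r * 0)) / (c * r))) := hcomp
        _ ≤ r ^ (d - 3) * (1 / (c * r)) :=
            mul_le_mul_of_nonneg_left hle (pow_nonneg hr.le _)
        _ = r ^ (d - 3) / (c * r) := by ring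
    have h1 : r ^ (2 - (d : ℤ)) *
        (∫ s in (0:ℝ)..r, s ^ (d - 3) * Real.exp (-c * (r ^ 2 - s ^ 2)))
        ≤ 1 / (c * r ^ 2) := by
      have hz : 0 < r ^ (2 - (d : ℤ)) := zpow_pos hr _
      calc r ^ (2 - (d : ℤ)) * _ ≤ r ^ (2 - (d : ℤ)) * (r ^ (d - 3) / (c * r)) :=
            mul_le_mul_of_nonneg_left hI hz.le
        _ = 1 / (c * r ^ 2) := by
            rw [div_eq_mul_inv, ← mul_assoc, hzp]
            field_simp
    have hyge : 1 ≤ y := by nlinarith [hyy]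
    calc r ^ (2 - (d : ℤ)) * _ ≤ 1 / (c * r ^ 2) := h1
      _ = 1 / y ^ 2 := by rw [hyy]
      _ ≤ 4 / (1 + y) ^ 2 := by
          rw [div_le_div_iff₀ (by positivity) (by positivity)]
          nlinarith
end

section
/- Let d ≥ 3 and c > 0. Then for all r > 0, |d/dr [ r^{2−d} ∫₀^r s^{d−3} e^{−c(r²−s²)} ds ]| ≤ C c r/(1 + c r²), with C depending only on d. -/
/-!
Write `G(r) = ∫₀^r s^n e^{-c(r²-s²)} ds` with `n = d - 3`. Since `G = e^{-cr²} ∫₀^r s^n e^{cs²} ds`,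
it solves `G' = r^n - 2crG`, so the derivative of `r^{-(n+1)} G` is
`(r^{n+1} - (n+1)G - 2cr²G) / r^{n+2}`. Comparing `G` with `∫₀^r s^n = r^{n+1}/(n+1)` through
`1 - cr² ≤ e^{-c(r²-s²)} ≤ 1` bounds the numerator by `2cr² r^{n+1}`, and
`e^{-c(r²-s²)} ≤ e^{-cr(r-s)}` gives `cr² G ≤ r^{n+1}`, which bounds it by `2r^{n+1}`.
Hence the derivative is at most `2 min(cr², 1)/r ≤ 4cr/(1+cr²)`.
-/

open MeasureTheory Real intervalIntegral

noncomputable def kernelIntegral (c : ℝ) (n : ℕ) (r : ℝ) : ℝ :=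
  ∫ s in (0 : ℝ)..r, s ^ n * exp (-c * (r ^ 2 - s ^ 2))

lemma integral_exp_mul_sub_le {a : ℝ} (ha : 0 < a) (r : ℝ) :
    ∫ s in (0 : ℝ)..r, exp (a * (s - r)) ≤ a⁻¹ := by
  have hderiv : ∀ s ∈ Set.uIcc 0 r,
      HasDerivAt (fun s => exp (a * (s - r)) / a) (exp (a * (s - r))) s := fun s _ =>
    ((((hasDerivAt_id s).sub_const r).const_mul a).exp.div_const a).congr_deriv
      (by field_simp; simp)
  rw [integral_eq_sub_of_hasDerivAt hderiv ((by fun_prop : Continuous _).intervalIntegrable _ _),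
    sub_self, mul_zero, exp_zero, div_sub_div_same, div_le_iff₀ ha, inv_mul_cancel₀ ha.ne']
  linarith [exp_pos (a * (0 - r))]

lemma min_le_two_mul_div_one_add {x : ℝ} (hx : 0 ≤ x) : min x 1 ≤ 2 * x / (1 + x) := by
  rw [le_div_iff₀ (by positivity)]
  rcases le_total x 1 with h | h
  · rw [min_eq_left h]; nlinarith
  · rw [min_eq_right h]; linarith

section kernelIntegral

variable {c : ℝ} {n : ℕ} {r : ℝ}

lemma kernelIntegral_eq_exp_mul (c : ℝ) (n : ℕ) (r : ℝ) :
    kernelIntegral c n r = exp (-c * r ^ 2) * ∫ s in (0 : ℝ)..r, s ^ n * exp (c * s ^ 2) := by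
  rw [kernelIntegral, ← intervalIntegral.integral_const_mul]
  refine integral_congr fun s _ => ?_
  rw [show -c * (r ^ 2 - s ^ 2) = -c * r ^ 2 + c * s ^ 2 by ring, exp_add]
  ring

lemma hasDerivAt_kernelIntegral (c : ℝ) (n : ℕ) (r : ℝ) :
    HasDerivAt (kernelIntegral c n) (r ^ n - 2 * c * r * kernelIntegral c n r) r := by
  have hcont : Continuous fun s : ℝ => s ^ n * exp (c * s ^ 2) := by fun_prop
  have hprim : HasDerivAt (fun t => ∫ s in (0 : ℝ)..t, s ^ n * exp (c * s ^ 2))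
      (r ^ n * exp (c * r ^ 2)) r :=
    integral_hasDerivAt_right (hcont.intervalIntegrable _ _)
      (hcont.stronglyMeasurableAtFilter _ _) hcont.continuousAt
  have hgauss : HasDerivAt (fun t : ℝ => exp (-c * t ^ 2))
      (exp (-c * r ^ 2) * (-c * (2 * r))) r := by
    simpa using ((hasDerivAt_pow 2 r).const_mul (-c)).exp
  rw [funext (kernelIntegral_eq_exp_mul c n)]
  refine (hgauss.mul hprim).congr_deriv ?_
  have hinv : exp (-c * r ^ 2) * exp (c * r ^ 2) = 1 := by rw [← exp_add]; simp
  beta_reduce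
  linear_combination r ^ n * hinv

lemma kernelIntegral_nonneg (hr : 0 ≤ r) : 0 ≤ kernelIntegral c n r :=
  integral_nonneg hr fun _ hs => mul_nonneg (pow_nonneg hs.1 n) (exp_pos _).le

lemma succ_mul_integral_pow (n : ℕ) (r : ℝ) :
    (n + 1) * ∫ s in (0 : ℝ)..r, s ^ n = r ^ (n + 1) := by
  rw [integral_pow, zero_pow n.succ_ne_zero, sub_zero]
  field_simp

lemma succ_mul_kernelIntegral_le (hc : 0 ≤ c) (hr : 0 ≤ r) :
    (n + 1) * kernelIntegral c n r ≤ r ^ (n + 1) := by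
  rw [← succ_mul_integral_pow]
  gcongr
  refine integral_mono_on hr ((by fun_prop : Continuous _).intervalIntegrable _ _)
    ((continuous_pow n).intervalIntegrable _ _) fun s hs => ?_
  refine mul_le_of_le_one_right (pow_nonneg hs.1 n) (exp_le_one_iff.2 ?_)
  nlinarith [mul_le_mul hs.2 hs.2 hs.1 hr]

lemma pow_succ_sub_succ_mul_kernelIntegral_le (hc : 0 ≤ c) (hr : 0 ≤ r) :
    r ^ (n + 1) - (n + 1) * kernelIntegral c n r ≤ c * r ^ 2 * r ^ (n + 1) := by
  have hpow : IntervalIntegrable (fun s : ℝ => s ^ n) volume 0 r :=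
    (continuous_pow n).intervalIntegrable _ _
  have hkernel : IntervalIntegrable (fun s : ℝ => s ^ n * exp (-c * (r ^ 2 - s ^ 2))) volume 0 r :=
    (by fun_prop : Continuous _).intervalIntegrable _ _
  have hdefect : (∫ s in (0 : ℝ)..r, s ^ n) - kernelIntegral c n r ≤
      c * r ^ 2 * ∫ s in (0 : ℝ)..r, s ^ n := by
    rw [kernelIntegral, ← integral_sub hpow hkernel, ← intervalIntegral.integral_const_mul]
    refine integral_mono_on hr (hpow.sub hkernel) (hpow.const_mul _) fun s hs => ?_
    have hs_pow := pow_nonneg hs.1 n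
    nlinarith [mul_le_mul_of_nonneg_left (add_one_le_exp (-c * (r ^ 2 - s ^ 2))) hs_pow,
      mul_nonneg (mul_nonneg hc (sq_nonneg s)) hs_pow]
  calc r ^ (n + 1) - (n + 1) * kernelIntegral c n r
      = (n + 1) * ((∫ s in (0 : ℝ)..r, s ^ n) - kernelIntegral c n r) := by
        rw [← succ_mul_integral_pow n r]; ring
    _ ≤ (n + 1) * (c * r ^ 2 * ∫ s in (0 : ℝ)..r, s ^ n) := by gcongr
    _ = c * r ^ 2 * r ^ (n + 1) := by rw [← succ_mul_integral_pow n r]; ring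

lemma mul_kernelIntegral_le (hc : 0 < c) (hr : 0 < r) :
    c * r ^ 2 * kernelIntegral c n r ≤ r ^ (n + 1) := by
  have hcr : 0 < c * r := mul_pos hc hr
  have hdecay : kernelIntegral c n r ≤ r ^ n * ∫ s in (0 : ℝ)..r, exp (c * r * (s - r)) := by
    rw [kernelIntegral, ← intervalIntegral.integral_const_mul]
    refine integral_mono_on hr.le ((by fun_prop : Continuous _).intervalIntegrable _ _)
      ((by fun_prop : Continuous _).intervalIntegrable _ _) fun s hs => ?_
    refine mul_le_mul (pow_le_pow_left₀ hs.1 hs.2 n) (exp_le_exp.2 ?_) (exp_pos _).le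
      (pow_nonneg hr.le n)
    nlinarith [mul_nonneg (mul_nonneg hc.le hs.1) (sub_nonneg.2 hs.2)]
  calc c * r ^ 2 * kernelIntegral c n r
      ≤ c * r ^ 2 * (r ^ n * (c * r)⁻¹) := by
        gcongr
        exact hdecay.trans (by gcongr; exact integral_exp_mul_sub_le hcr r)
    _ = r ^ (n + 1) := by field_simp; ring

lemma hasDerivAt_zpow_mul_kernelIntegral (c : ℝ) (n : ℕ) (hr : r ≠ 0) :
    HasDerivAt (fun t : ℝ => t ^ (-(n + 1 : ℤ)) * kernelIntegral c n t)
      ((r ^ (n + 1) - (n + 1) * kernelIntegral c n r - 2 * c * r ^ 2 * kernelIntegral c n r)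
        / r ^ (n + 2)) r := by
  refine ((hasDerivAt_zpow _ r (Or.inl hr)).mul (hasDerivAt_kernelIntegral c n r)).congr_deriv ?_
  rw [show -(n + 1 : ℤ) - 1 = -((n + 2 : ℕ) : ℤ) by push_cast; ring,
    show -(n + 1 : ℤ) = -((n + 1 : ℕ) : ℤ) by push_cast; ring, zpow_neg, zpow_neg,
    zpow_natCast, zpow_natCast]
  field_simp
  push_cast
  ring

lemma abs_deriv_zpow_mul_kernelIntegral_le (hc : 0 < c) (hr : 0 < r) :
    |(r ^ (n + 1) - (n + 1) * kernelIntegral c n r - 2 * c * r ^ 2 * kernelIntegral c n r)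
        / r ^ (n + 2)| ≤ 4 * c * r / (1 + c * r ^ 2) := by
  set G := kernelIntegral c n r
  set N := r ^ (n + 1) - (n + 1) * G - 2 * c * r ^ 2 * G
  have hG := kernelIntegral_nonneg (c := c) (n := n) hr.le
  have hsucc := succ_mul_kernelIntegral_le (n := n) hc.le hr.le
  have hdefect := pow_succ_sub_succ_mul_kernelIntegral_le (n := n) hc.le hr.le
  have hdecay := mul_kernelIntegral_le (n := n) hc hr
  have hQ : 0 < r ^ (n + 1) := pow_pos hr _
  have hx : 0 ≤ c * r ^ 2 := by positivity
  have hsmall : |N| ≤ 2 * (c * r ^ 2) * r ^ (n + 1) :=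
    abs_le.2 ⟨by nlinarith, by nlinarith⟩
  have hlarge : |N| ≤ 2 * r ^ (n + 1) := abs_le.2 ⟨by nlinarith, by nlinarith⟩
  have hmin : |N| ≤ 2 * min (c * r ^ 2) 1 * r ^ (n + 1) := by
    rcases min_choice (c * r ^ 2) 1 with h | h <;> rw [h] <;> linarith
  calc |N / r ^ (n + 2)| = |N| / r ^ (n + 1) / r := by
        rw [abs_div, abs_of_pos (pow_pos hr _), pow_succ, div_div]
    _ ≤ 2 * min (c * r ^ 2) 1 / r := by
        gcongr
        rwa [div_le_iff₀ hQ]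
    _ ≤ 2 * (2 * (c * r ^ 2) / (1 + c * r ^ 2)) / r := by
        gcongr
        exact min_le_two_mul_div_one_add hx
    _ = 4 * c * r / (1 + c * r ^ 2) := by field_simp; ring

end kernelIntegral

/-- Derivative bound for the temperature kernel: for `d ≥ 3` there is `C > 0`
(depending only on `d`) such that for all `c > 0` and `r > 0`, the derivative of
`r ↦ r^{2-d} ∫₀^r s^{d-3} e^{-c(r²-s²)} ds` is bounded in absolute value by
`C c r/(1 + c r²)`. -/
theorem stmt11 (d : ℕ) (hd : 3 ≤ d) :
    ∃ C > 0, ∀ c : ℝ, 0 < c → ∀ r : ℝ, 0 < r → ∀ y : ℝ,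
      HasDerivAt (fun t : ℝ =>
        t ^ (2 - (d : ℤ)) * ∫ s in (0:ℝ)..t, s ^ (d - 3) * Real.exp (-c * (t ^ 2 - s ^ 2)))
        y r →
      |y| ≤ C * c * r / (1 + c * r ^ 2) := by
  obtain ⟨n, rfl⟩ := Nat.exists_eq_add_of_le' hd
  refine ⟨4, by norm_num, fun c hc r hr y hy => ?_⟩
  have hexp : 2 - ((n + 3 : ℕ) : ℤ) = -(n + 1 : ℤ) := by push_cast; ring
  simp only [hexp, Nat.add_sub_cancel] at hy
  rw [hy.unique (hasDerivAt_zpow_mul_kernelIntegral c n hr.ne')]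
  exact abs_deriv_zpow_mul_kernelIntegral_le hc hr
end
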